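/- arXiv:2205.02503 — 2 statements merged into one kernel-verified Lean document; each statement's English description precedes it below -/
import Mathlib

section
/- Let $R \geq 8$, $C = 4\max(1, \sqrt{\|g\|_\infty})$ where $g : \mathbb{R} \to \mathbb{R}$ is bounded, and define for $x \in (-R, R)$: $\mathscr{E}_R(x) = \frac{2|x| \|g\|_\infty}{(R^2 - x^2)^2}$ and $\mathscr{G}_R(x) = \frac{x^2}{(R^2 - x^2)^4}$. Then for all $x \in (-R, R)$, $\mathscr{G}_R(x) - \mathscr{E}_R(x) \geq -8\max(1, \|g\|_\infty^2)$. -/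
open Set

/-- Key technical claim for the uniform `L^∞` bound: for `R ≥ 8` and any bound `G ≥ 0`
on `|g|`, `𝒢_R(x) - ℰ_R(x) ≥ -8 max(1, G²)` on `(-R, R)`. -/
theorem claim_GR_minus_ER
    (R G : ℝ) (hR : 8 ≤ R)
    (g : ℝ → ℝ) (hG : 0 ≤ G) (hbg : ∀ x : ℝ, |g x| ≤ G) :
    ∀ x ∈ Ioo (-R) R,
      x ^ 2 / (R ^ 2 - x ^ 2) ^ 4 - 2 * |x| * G / (R ^ 2 - x ^ 2) ^ 2
        ≥ -8 * max 1 (G ^ 2) := by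
  intro x hx
  obtain ⟨h1, h2⟩ := hx
  have ht : 0 < R ^ 2 - x ^ 2 := by nlinarith
  have ha : x ^ 2 / (R ^ 2 - x ^ 2) ^ 4 = (|x| / (R ^ 2 - x ^ 2) ^ 2) ^ 2 := by
    rw [div_pow, sq_abs]; ring_nf
  have hb : 2 * |x| * G / (R ^ 2 - x ^ 2) ^ 2
      = 2 * (|x| / (R ^ 2 - x ^ 2) ^ 2) * G := by ring
  rw [ha, hb]
  have hM : G ^ 2 ≤ max 1 (G ^ 2) := le_max_right _ _
  have h1M : (1 : ℝ) ≤ max 1 (G ^ 2) := le_max_left _ _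
  nlinarith [sq_nonneg (|x| / (R ^ 2 - x ^ 2) ^ 2 - G)]
end

section
/- Let $x > 0$, $t > 0$, $M > 0$. For any control $\omega \in L^2(0,t)$ with $\int_0^t \tfrac12 \omega(s)^2\,ds \leq M$, let $z_\omega$ solve the backward reflected dynamics $z_\omega(t) = x$, $(\dot z_\omega(s) - \omega(s))(q - z_\omega(s)) \leq 0$ for all $q \geq 0$ and a.e. $s$. Then for every $\varepsilon \in (0, x)$, setting $\tau_0 = \left(\frac{\varepsilon}{\sqrt{2M}}\right)^2$, we have $|z_\omega(t-\tau) - x| \leq \varepsilon$ for all $0 \leq \tau \leq \tau_0$; in particular the modulus of continuity of $z_\omega$ at the terminal time $t$ is uniform over all controls of energy at most $M$. -/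
/-!
Where `z > 0` the variational inequality forces `z' = ω`, so by Cauchy–Schwarz
`(z b - z a)² ≤ (b - a) ∫ ω² ≤ 2M (b - a)` on every stretch `[a, b]` on which `z` stays positive.
Let `s` be the last time in `[t - τ, t]` at which `z ≤ x - ε` (or `s = t - τ` if there is none).
Then `z > x - ε > 0` on `(s, t]`, so `(x - z s)² ≤ 2M (t - s)`; if `s > t - τ` the left side is
at least `ε² ≥ 2Mτ`, which is impossible. Hence `s = t - τ` and `(x - z (t - τ))² ≤ 2Mτ ≤ ε²`.
-/

open Set MeasureTheory

lemma eq_of_forall_nonneg_mul_sub_nonpos {v w z : ℝ} (hz : 0 < z)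
    (h : ∀ q : ℝ, 0 ≤ q → (v - w) * (q - z) ≤ 0) : v = w := by
  have h₀ := h 0 le_rfl
  have h₂ := h (2 * z) (by positivity)
  nlinarith

lemma ae_eq_of_forall_nonneg_mul_sub_nonpos {t : ℝ} {ω z z' : ℝ → ℝ} {S : Set ℝ}
    (hVI : ∀ᵐ s ∂(volume.restrict (Icc (0:ℝ) t)),
        ∀ q : ℝ, 0 ≤ q → (z' s - ω s) * (q - z s) ≤ 0)
    (hS : S ⊆ Icc 0 t) (hpos : ∀ s ∈ S, 0 < z s) :
    ∀ᵐ s, s ∈ S → z' s = ω s := by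
  filter_upwards [(ae_restrict_iff' measurableSet_Icc).mp hVI] with s hs hsS
  exact eq_of_forall_nonneg_mul_sub_nonpos (hpos s hsS) (hs (hS hsS))

theorem sq_intervalIntegral_le_mul_integral_sq {f : ℝ → ℝ} {a b : ℝ} (hab : a ≤ b)
    (hf : IntervalIntegrable f volume a b)
    (hf2 : IntervalIntegrable (fun s => f s ^ 2) volume a b) :
    (∫ s in a..b, f s) ^ 2 ≤ (b - a) * ∫ s in a..b, f s ^ 2 := by
  -- `c ↦ ∫ (f - c)²` is a nonnegative quadratic, so its discriminant is nonpositive.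
  have hquad : ∀ c : ℝ, 0 ≤ (b - a) * (c * c) + (-2 * ∫ s in a..b, f s) * c
      + ∫ s in a..b, f s ^ 2 := fun c => by
    have hexpand : ∫ s in a..b, (f s - c) ^ 2
        = (b - a) * (c * c) + (-2 * ∫ s in a..b, f s) * c + ∫ s in a..b, f s ^ 2 := by
      simp only [sub_sq]
      rw [intervalIntegral.integral_add (hf2.sub ((hf.const_mul 2).mul_const c))
          intervalIntegrable_const,
        intervalIntegral.integral_sub hf2 ((hf.const_mul 2).mul_const c),
        intervalIntegral.integral_mul_const, intervalIntegral.integral_const_mul,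
        intervalIntegral.integral_const, smul_eq_mul]
      ring
    exact hexpand ▸ intervalIntegral.integral_nonneg hab fun s _ => sq_nonneg _
  have hdiscrim := discrim_le_zero hquad
  rw [discrim] at hdiscrim
  nlinarith

lemma sq_sub_le_mul_integral_sq_of_pos {t a b : ℝ} {ω z z' : ℝ → ℝ}
    (hint : IntervalIntegrable z' volume 0 t)
    (hAC : ∀ s ∈ Icc 0 t, z s = z 0 + ∫ r in (0:ℝ)..s, z' r)
    (hVI : ∀ᵐ s ∂(volume.restrict (Icc (0:ℝ) t)),
        ∀ q : ℝ, 0 ≤ q → (z' s - ω s) * (q - z s) ≤ 0)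
    (hω2 : IntervalIntegrable (fun s => ω s ^ 2) volume 0 t)
    (ha : 0 ≤ a) (hab : a ≤ b) (hbt : b ≤ t) (hpos : ∀ s ∈ Ioc a b, 0 < z s) :
    (z b - z a) ^ 2 ≤ (b - a) * ∫ s in (0:ℝ)..t, ω s ^ 2 := by
  have ht : 0 ≤ t := ha.trans (hab.trans hbt)
  have hsub : ∀ c ∈ Icc 0 t, ∀ d ∈ Icc 0 t, uIcc c d ⊆ uIcc 0 t := fun c hc d hd =>
    uIcc_subset_uIcc (by rwa [uIcc_of_le ht]) (by rwa [uIcc_of_le ht])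
  have h0 : (0:ℝ) ∈ Icc 0 t := ⟨le_rfl, ht⟩
  have ha' : a ∈ Icc 0 t := ⟨ha, hab.trans hbt⟩
  have hb' : b ∈ Icc 0 t := ⟨ha.trans hab, hbt⟩
  have hinc : z b - z a = ∫ s in a..b, z' s := by
    rw [hAC b hb', hAC a ha', add_sub_add_left_eq_sub,
      intervalIntegral.integral_interval_sub_left (hint.mono_set (hsub 0 h0 b hb'))
        (hint.mono_set (hsub 0 h0 a ha'))]
  have hae : ∀ᵐ s, s ∈ uIoc a b → z' s = ω s := by
    rw [uIoc_of_le hab]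
    exact ae_eq_of_forall_nonneg_mul_sub_nonpos hVI
      (Ioc_subset_Icc_self.trans (Icc_subset_Icc ha hbt)) hpos
  have hω : IntervalIntegrable ω volume a b :=
    (hint.mono_set (hsub a ha' b hb')).congr_ae ((ae_restrict_iff' measurableSet_uIoc).mpr hae)
  calc (z b - z a) ^ 2 = (∫ s in a..b, ω s) ^ 2 := by
        rw [hinc, intervalIntegral.integral_congr_ae hae]
    _ ≤ (b - a) * ∫ s in a..b, ω s ^ 2 :=
        sq_intervalIntegral_le_mul_integral_sq hab hω (hω2.mono_set (hsub a ha' b hb'))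
    _ ≤ (b - a) * ∫ s in (0:ℝ)..t, ω s ^ 2 :=
        mul_le_mul_of_nonneg_left (intervalIntegral.integral_mono_interval ha hab hbt
          (ae_of_all _ fun s => sq_nonneg (ω s)) hω2) (sub_nonneg.2 hab)

theorem ContinuousOn.exists_mem_Icc_forall_Ioc_lt {g : ℝ → ℝ} {a b : ℝ} (c : ℝ) (hab : a ≤ b)
    (hg : ContinuousOn g (Icc a b)) :
    ∃ s ∈ Icc a b, (s = a ∨ g s ≤ c) ∧ ∀ r ∈ Ioc s b, c < g r := by
  set S := {a} ∪ (Icc a b ∩ g ⁻¹' Iic c)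
  have hS : IsClosed S :=
    isClosed_singleton.union (hg.preimage_isClosed_of_isClosed isClosed_Icc isClosed_Iic)
  have hSne : S.Nonempty := ⟨a, Or.inl rfl⟩
  have hSb : ∀ s ∈ S, s ≤ b := by
    rintro s (rfl | hs)
    exacts [hab, hs.1.2]
  have hmem : sSup S ∈ S := hS.csSup_mem hSne ⟨b, hSb⟩
  have hle : a ≤ sSup S := le_csSup ⟨b, hSb⟩ (Or.inl rfl)
  refine ⟨sSup S, ⟨hle, csSup_le hSne hSb⟩, hmem.imp id And.right, fun r hr => ?_⟩
  by_contra! hgr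
  exact (not_le.mpr hr.1) (le_csSup ⟨b, hSb⟩ (Or.inr ⟨⟨hle.trans hr.1.le, hr.2⟩, hgr⟩))

lemma mul_le_sq_of_le_div_sqrt_sq {k τ ε : ℝ} (hτ : 0 ≤ τ) (hτk : τ ≤ (ε / Real.sqrt k) ^ 2) :
    k * τ ≤ ε ^ 2 := by
  rcases le_or_gt k 0 with hk | hk
  · nlinarith [sq_nonneg ε]
  · rwa [div_pow, Real.sq_sqrt hk.le, le_div_iff₀ hk, mul_comm] at hτk

theorem uniform_terminal_continuity_general
    (t x M : ℝ)
    (ω z z' : ℝ → ℝ)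
    (hzc : ContinuousOn z (Icc 0 t))
    (hzt : z t = x)
    (hint : IntervalIntegrable z' volume 0 t)
    (hAC : ∀ s ∈ Icc 0 t, z s = z 0 + ∫ r in (0:ℝ)..s, z' r)
    (hVI : ∀ᵐ s ∂(volume.restrict (Icc (0:ℝ) t)),
        ∀ q : ℝ, 0 ≤ q → (z' s - ω s) * (q - z s) ≤ 0)
    (hω2 : IntervalIntegrable (fun s => ω s ^ 2) volume 0 t)
    (hE : ∫ s in (0:ℝ)..t, ω s ^ 2 / 2 ≤ M) :
    ∀ ε ∈ Ioo 0 x, ∀ τ ∈ Icc (0:ℝ) ((ε / Real.sqrt (2 * M)) ^ 2),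
      τ ≤ t → |z (t - τ) - x| ≤ ε := by
  rintro ε ⟨hε, hεx⟩ τ ⟨hτ, hττ₀⟩ hτt
  set J := ∫ s in (0:ℝ)..t, ω s ^ 2
  have hJ : J ≤ 2 * M := by rw [intervalIntegral.integral_div] at hE; linarith
  have hτJ : τ * J ≤ ε ^ 2 := (mul_le_mul_of_nonneg_left hJ hτ).trans
    (by linarith [mul_le_sq_of_le_div_sqrt_sq hτ hττ₀])
  obtain ⟨s, ⟨hτs, hst⟩, hexit, hgt⟩ :=
    (hzc.mono (Icc_subset_Icc (by linarith) le_rfl)).exists_mem_Icc_forall_Ioc_lt (x - ε)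
      (by linarith : t - τ ≤ t)
  have hinc : (x - z s) ^ 2 ≤ (t - s) * J := hzt ▸
    sq_sub_le_mul_integral_sq_of_pos hint hAC hVI hω2 (by linarith) hst le_rfl
      fun r hr => by linarith [hgt r hr]
  have hs : s = t - τ := hexit.elim id fun hle => by
    have hε2 : ε ^ 2 ≤ (t - s) * J := (pow_le_pow_left₀ hε.le (by linarith) 2).trans hinc
    have hJpos : 0 < J := pos_of_mul_pos_right ((pow_pos hε 2).trans_le hε2) (sub_nonneg.2 hst)
    linarith [le_of_mul_le_mul_right (hτJ.trans hε2) hJpos]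
  rw [hs, sub_sub_cancel] at hinc
  rw [abs_sub_comm]
  exact abs_le_of_sq_le_sq (hinc.trans hτJ) hε.le

/-- Uniform terminal continuity of backward reflected trajectories: for terminal
point `x > 0` and any control `ω` of energy at most `M`, the backward trajectory
stays within `ε` of `x` for `τ ≤ (ε/√(2M))²`, uniformly in `ω`. -/
theorem uniform_terminal_continuity
    (t x M : ℝ) (ht : 0 < t) (hx : 0 < x) (hM : 0 < M)
    (ω z z' : ℝ → ℝ)
    (hzc : ContinuousOn z (Icc 0 t))
    (hznn : ∀ s ∈ Icc 0 t, 0 ≤ z s)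
    (hzt : z t = x)
    (hint : IntervalIntegrable z' volume 0 t)
    (hAC : ∀ s ∈ Icc 0 t, z s = z 0 + ∫ r in (0:ℝ)..s, z' r)
    (hVI : ∀ᵐ s ∂(volume.restrict (Icc (0:ℝ) t)),
        ∀ q : ℝ, 0 ≤ q → (z' s - ω s) * (q - z s) ≤ 0)
    (hω2 : IntervalIntegrable (fun s => ω s ^ 2) volume 0 t)
    (hE : ∫ s in (0:ℝ)..t, ω s ^ 2 / 2 ≤ M) :
    ∀ ε ∈ Ioo 0 x, ∀ τ ∈ Icc (0:ℝ) ((ε / Real.sqrt (2 * M)) ^ 2),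
      τ ≤ t → |z (t - τ) - x| ≤ ε :=
  uniform_terminal_continuity_general t x M ω z z' hzc hzt hint hAC hVI hω2 hE
end
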